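/- For every integer n ≥ 5, the graph H_n = W_n − e (wheel minus a spoke edge) is not super edge-magic. -/

import Mathlib

open SimpleGraph

/-- A super edge-magic labeling of `G` with magic constant `k`: a bijection from
vertices and edges onto `{1, …, p+q}` sending vertices onto `{1, …, p}`, with
`f x + f (xy) + f y = k` for every edge `xy`. -/
def IsSEMWith {V : Type*} [Fintype V] (G : SimpleGraph V) (k : ℕ) : Prop :=
  ∃ (f : V → ℕ) (g : G.edgeSet → ℕ),
    Function.Injective (Sum.elim f g) ∧
    Set.range (Sum.elim f g) = Set.Icc 1 (Fintype.card V + G.edgeSet.ncard) ∧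
    Set.range f = Set.Icc 1 (Fintype.card V) ∧
    ∀ (x y : V) (h : G.Adj x y), f x + g ⟨s(x, y), G.mem_edgeSet.mpr h⟩ + f y = k

/-- `G` is super edge-magic. -/
def IsSEM {V : Type*} [Fintype V] (G : SimpleGraph V) : Prop :=
  ∃ k : ℕ, IsSEMWith G k

/-- The graph `G ∪ t K₁`: `G` together with `t` added isolated vertices. -/
def unionIsolated {V : Type*} (G : SimpleGraph V) (t : ℕ) : SimpleGraph (V ⊕ Fin t) :=
  G.map Function.Embedding.inl

/-- The super edge-magic deficiency `μₛ(G)`: the least `t` such that `G ∪ t K₁`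
is super edge-magic, or `⊤` if there is no such `t`. -/
noncomputable def semDeficiency {V : Type*} [Fintype V] (G : SimpleGraph V) : ℕ∞ :=
  sInf ((fun t : ℕ => (t : ℕ∞)) '' {t : ℕ | IsSEM (unionIsolated G t)})

/-- `H n`: the wheel `W_n` (hub `0`, rim `1, …, n`) minus the spoke `{0, 1}`. -/
def wheelMinusSpoke (n : ℕ) : SimpleGraph (Fin (n + 1)) :=
  SimpleGraph.fromRel (fun i j =>
    ((i : ℕ) = 0 ∧ 2 ≤ (j : ℕ)) ∨
    ((j : ℕ) = (i : ℕ) + 1 ∧ 1 ≤ (i : ℕ)) ∨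
    ((i : ℕ) = n ∧ (j : ℕ) = 1))

/-- The join `P_n + K̄_m`: a path `u_1 … u_n` plus `m` vertices joined to every `u_i`. -/
def pathJoin (n m : ℕ) : SimpleGraph (Fin n ⊕ Fin m) :=
  SimpleGraph.fromRel (fun a b =>
    (∃ i j : Fin n, a = Sum.inl i ∧ b = Sum.inl j ∧ (j : ℕ) = (i : ℕ) + 1) ∨
    (∃ (i : Fin n) (j : Fin m), a = Sum.inl i ∧ b = Sum.inr j))

/-- The join `K_{1,n} + K̄_m`: a star with center `Sum.inl 0` and leaves
`Sum.inl i`, `i ≠ 0`, plus `m` vertices joined to all star vertices. -/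
def starJoin (n m : ℕ) : SimpleGraph (Fin (n + 1) ⊕ Fin m) :=
  SimpleGraph.fromRel (fun a b =>
    (∃ i : Fin (n + 1), a = Sum.inl 0 ∧ b = Sum.inl i ∧ i ≠ 0) ∨
    (∃ (i : Fin (n + 1)) (j : Fin m), a = Sum.inl i ∧ b = Sum.inr j))

/-- The join `C_n + K̄_m`: a cycle `u_1 … u_n` plus `m` vertices joined to every `u_i`. -/
def cycleJoin (n m : ℕ) : SimpleGraph (Fin n ⊕ Fin m) :=
  SimpleGraph.fromRel (fun a b =>
    (∃ i j : Fin n, a = Sum.inl i ∧ b = Sum.inl j ∧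
      ((j : ℕ) = (i : ℕ) + 1 ∨ ((i : ℕ) = n - 1 ∧ (j : ℕ) = 0))) ∨
    (∃ (i : Fin n) (j : Fin m), a = Sum.inl i ∧ b = Sum.inr j))

/-- The join `G + K̄_m`: `G` plus `m` new vertices joined to every vertex of `G`. -/
def joinIsolated {V : Type*} (G : SimpleGraph V) (m : ℕ) : SimpleGraph (V ⊕ Fin m) :=
  SimpleGraph.fromRel (fun a b =>
    (∃ x y : V, a = Sum.inl x ∧ b = Sum.inl y ∧ G.Adj x y) ∨
    (∃ (x : V) (j : Fin m), a = Sum.inl x ∧ b = Sum.inr j))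

/-!
A super edge-magic labeling of a graph with `p` vertices and `2p - 3` edges amounts to a
labeling of its vertices by `1, …, p` whose edge sums are `3, …, 2p - 1`, each taken once, and
`H_n` has `n + 1` vertices and `2n - 1` edges. The sums `3`, `4`, `5` can only be `1 + 2`,
`1 + 3` and `1 + 4` or `2 + 3`, so if the hub carried none of the labels `1, …, 4` the rim
cycle would have a vertex with three rim neighbours or a triangle. Hence the hub label is at
most `4`, and applied to the complementary labeling `n + 2 - f`, at least `n - 2`. This leaves
`n = 5, 6`, which the degree-weighted count `∑ deg v · f v = 3 + ⋯ + (2n + 1)` rules out.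
-/

namespace SimpleGraph

variable {V : Type*}

def edgeSum (f : V → ℕ) : Sym2 V → ℕ :=
  Sym2.lift ⟨fun x y => f x + f y, fun _ _ => Nat.add_comm _ _⟩

@[simp] lemma edgeSum_mk (f : V → ℕ) (x y : V) : edgeSum f s(x, y) = f x + f y := rfl

lemma sum_degree_mul_eq_sum_edgeSum [Fintype V] (G : SimpleGraph V) [DecidableRel G.Adj]
    (f : V → ℕ) : ∑ v, G.degree v * f v = ∑ e ∈ G.edgeFinset, edgeSum f e := by
  classical
  have hfst : ∑ d : G.Dart, f d.fst = ∑ v, G.degree v * f v := by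
    rw [← Finset.sum_fiberwise Finset.univ (fun d : G.Dart => d.fst)]
    refine Finset.sum_congr rfl fun v _ => ?_
    rw [Finset.sum_congr rfl fun d hd => congrArg f (Finset.mem_filter.1 hd).2, Finset.sum_const,
      smul_eq_mul]
    congr 1
    convert G.dart_fst_fiber_card_eq_degree v
  have hsnd : ∑ d : G.Dart, f d.snd = ∑ d : G.Dart, f d.fst :=
    Fintype.sum_equiv (Dart.symm_involutive.toPerm _) _ _ fun _ => rfl
  have hedge : ∑ d : G.Dart, edgeSum f d.edge = 2 * ∑ e ∈ G.edgeFinset, edgeSum f e := by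
    rw [← Finset.sum_fiberwise_of_maps_to (g := Dart.edge) (t := G.edgeFinset)
      fun d _ => mem_edgeFinset.2 d.edge_mem, Finset.mul_sum]
    refine Finset.sum_congr rfl fun e he => ?_
    rw [Finset.sum_congr rfl fun d hd => congrArg (edgeSum f) (Finset.mem_filter.1 hd).2,
      Finset.sum_const, dart_edge_fiber_card G e (mem_edgeFinset.1 he), smul_eq_mul]
  have hsplit :
      ∑ d : G.Dart, edgeSum f d.edge = ∑ d : G.Dart, f d.fst + ∑ d : G.Dart, f d.snd :=
    Finset.sum_add_distrib
  omega

lemma edgeSum_mem_Icc {G : SimpleGraph V} {f : V → ℕ} {p : ℕ} (hf : Function.Injective f)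
    (hfp : ∀ v, f v ∈ Set.Icc 1 p) {e : Sym2 V} (he : e ∈ G.edgeSet) :
    edgeSum f e ∈ Set.Icc 3 (2 * p - 1) := by
  induction e using Sym2.ind with
  | _ x y =>
    have hne : f x ≠ f y := hf.ne (G.ne_of_adj he)
    have := hfp x; have := hfp y
    simp only [Set.mem_Icc, edgeSum_mk] at *
    omega

/-- For a graph with `p` vertices and `2p - 3` edges, this is what a super edge-magic labeling
amounts to (`IsSEMWith.exists_isSaturatedLabeling`). -/
structure IsSaturatedLabeling [Fintype V] (G : SimpleGraph V) (f : V → ℕ) : Prop where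
  injective : Function.Injective f
  range_eq : Set.range f = Set.Icc 1 (Fintype.card V)
  injOn_edgeSum : Set.InjOn (edgeSum f) G.edgeSet
  surjOn_edgeSum : Set.SurjOn (edgeSum f) G.edgeSet (Set.Icc 3 (2 * Fintype.card V - 1))

namespace IsSaturatedLabeling

variable [Fintype V] {G : SimpleGraph V} {f : V → ℕ}

lemma mem_Icc (hf : G.IsSaturatedLabeling f) (v : V) : f v ∈ Set.Icc 1 (Fintype.card V) :=
  hf.range_eq ▸ Set.mem_range_self v

lemma compl (hf : G.IsSaturatedLabeling f) :
    G.IsSaturatedLabeling (fun v => Fintype.card V + 1 - f v) := by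
  set p := Fintype.card V
  have hsum (e : Sym2 V) : edgeSum (fun v => p + 1 - f v) e + edgeSum f e = 2 * p + 2 := by
    induction e using Sym2.ind with
    | _ x y =>
      have := hf.mem_Icc x; have := hf.mem_Icc y
      simp only [Set.mem_Icc, edgeSum_mk] at *
      omega
  refine ⟨fun x y hxy => hf.injective ?_, ?_, fun e he e' he' h => hf.injOn_edgeSum he he' ?_,
    fun s hs => ?_⟩
  · have := hf.mem_Icc x; have := hf.mem_Icc y
    simp only [Set.mem_Icc] at *
    omega
  · ext a
    constructor
    · rintro ⟨v, rfl⟩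
      have := hf.mem_Icc v
      simp only [Set.mem_Icc] at *
      omega
    · intro ha
      simp only [Set.mem_Icc] at ha
      obtain ⟨v, hv⟩ : p + 1 - a ∈ Set.range f := hf.range_eq ▸ ⟨by omega, by omega⟩
      exact ⟨v, show p + 1 - f v = a by omega⟩
  · have := hsum e; have := hsum e'
    omega
  · simp only [Set.mem_Icc] at hs
    obtain ⟨e, he, hes⟩ := hf.surjOn_edgeSum (show 2 * p + 2 - s ∈ Set.Icc 3 (2 * p - 1) from
      ⟨by omega, by omega⟩)
    exact ⟨e, he, by have := hsum e; omega⟩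

lemma exists_adj_lt (hf : G.IsSaturatedLabeling f) {s : ℕ}
    (hs : s ∈ Set.Icc 3 (2 * Fintype.card V - 1)) :
    ∃ x y, G.Adj x y ∧ f x < f y ∧ f x + f y = s := by
  obtain ⟨e, he, rfl⟩ := hf.surjOn_edgeSum hs
  induction e using Sym2.ind with
  | _ x y =>
    rcases lt_or_gt_of_ne (hf.injective.ne (G.ne_of_adj he)) with h | h
    · exact ⟨x, y, he, h, rfl⟩
    · exact ⟨y, x, G.adj_symm he, h, add_comm _ _⟩

lemma exists_adj_small_labels (hf : G.IsSaturatedLabeling f) (hp : 4 ≤ Fintype.card V) :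
    ∃ a b c d, f a = 1 ∧ f b = 2 ∧ f c = 3 ∧ f d = 4 ∧
      G.Adj a b ∧ G.Adj a c ∧ (G.Adj a d ∨ G.Adj b c) := by
  have hpos (v : V) : 1 ≤ f v := (hf.mem_Icc v).1
  obtain ⟨a, b, hab, hlt, h3⟩ := hf.exists_adj_lt (s := 3) ⟨le_rfl, by omega⟩
  obtain ⟨a', c, hac, hlt', h4⟩ := hf.exists_adj_lt (s := 4) ⟨by omega, by omega⟩
  have := hpos a; have := hpos a'
  obtain rfl : a = a' := hf.injective (by omega)
  obtain ⟨x, y, hxy, hlt'', h5⟩ := hf.exists_adj_lt (s := 5) ⟨by omega, by omega⟩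
  have := hpos x
  obtain ⟨hx, hy⟩ | ⟨hx, hy⟩ : f x = 1 ∧ f y = 4 ∨ f x = 2 ∧ f y = 3 := by omega
  · obtain rfl : a = x := hf.injective (by omega)
    exact ⟨a, b, c, y, by omega, by omega, by omega, hy, hab, hac, .inl hxy⟩
  · obtain rfl : b = x := hf.injective (by omega)
    obtain rfl : c = y := hf.injective (by omega)
    obtain ⟨d, hd⟩ : 4 ∈ Set.range f := hf.range_eq ▸ ⟨by omega, hp⟩
    exact ⟨a, b, c, d, by omega, hx, hy, hd, hab, hac, .inr hxy⟩

lemma sum_eq (hf : G.IsSaturatedLabeling f) :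
    ∑ v, f v = ∑ i ∈ Finset.Icc 1 (Fintype.card V), i := by
  classical
  have himage := Finset.sum_image (f := id) (s := Finset.univ) fun x _ y _ h => hf.injective h
  simp only [id_eq] at himage
  rw [← himage]
  congr 1
  rw [← Finset.coe_inj, Finset.coe_image, Finset.coe_univ, Set.image_univ, hf.range_eq,
    Finset.coe_Icc]

lemma sum_degree_mul_eq [DecidableRel G.Adj] (hf : G.IsSaturatedLabeling f) :
    ∑ v, G.degree v * f v = ∑ i ∈ Finset.Icc 3 (2 * Fintype.card V - 1), i := by
  rw [sum_degree_mul_eq_sum_edgeSum]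
  refine Finset.sum_nbij (edgeSum f) (fun e he => ?_) (fun e he e' he' => ?_) (fun s hs => ?_)
    fun _ _ => rfl
  · simpa using edgeSum_mem_Icc hf.injective hf.mem_Icc (mem_edgeFinset.1 he)
  · exact hf.injOn_edgeSum (mem_edgeFinset.1 he) (mem_edgeFinset.1 he')
  · obtain ⟨e, he, rfl⟩ := hf.surjOn_edgeSum (by simpa using hs)
    exact ⟨e, mem_edgeFinset.2 he, rfl⟩

end IsSaturatedLabeling

end SimpleGraph

/-- The edge labels are `k - (f x + f y)`, so they fill `p + 1, …, p + q` exactly when the edge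
sums fill `k - p - q, …, k - p - 1`; as the edge sums lie in `3, …, 2p - 1`, having
`q ≥ 2p - 3` edges pins them down. -/
lemma IsSEMWith.exists_isSaturatedLabeling {V : Type*} [Fintype V] {G : SimpleGraph V} {k : ℕ}
    (hk : IsSEMWith G k) (hq : 2 * Fintype.card V - 3 ≤ G.edgeSet.ncard) :
    ∃ f, G.IsSaturatedLabeling f := by
  obtain ⟨f, g, hinj, hrange, hrangef, hmagic⟩ := hk
  set p := Fintype.card V
  set q := G.edgeSet.ncard
  have hf : Function.Injective f := fun x y h => Sum.inl_injective (hinj h)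
  have hg : Function.Injective g := fun e e' h => Sum.inr_injective (hinj h)
  have hfp (v : V) : f v ∈ Set.Icc 1 p := hrangef ▸ Set.mem_range_self v
  have hg_surj {m : ℕ} (hm : m ∈ Set.Icc (p + 1) (p + q)) : ∃ e, g e = m := by
    obtain ⟨v | e, hve⟩ : m ∈ Set.range (Sum.elim f g) :=
      hrange ▸ ⟨by have := hm.1; omega, hm.2⟩
    · have := hfp v
      simp only [Sum.elim_inl, Set.mem_Icc] at hve this hm
      omega
    · exact ⟨e, hve⟩
  have hmagic' (e : Sym2 V) (he : e ∈ G.edgeSet) : edgeSum f e + g ⟨e, he⟩ = k := by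
    induction e using Sym2.ind with
    | _ x y => simpa [add_right_comm] using hmagic x y he
  refine ⟨f, hf, hrangef, fun e he e' he' h => ?_, fun s hs => ?_⟩
  · have := hmagic' e he; have := hmagic' e' he'
    exact congrArg Subtype.val (@hg ⟨e, he⟩ ⟨e', he'⟩ (by omega))
  · have hmem {e : Sym2 V} (he : e ∈ G.edgeSet) := edgeSum_mem_Icc hf hfp he
    simp only [Set.mem_Icc] at hs hmem
    obtain ⟨⟨emax, hemax⟩, hgmax⟩ := hg_surj (m := p + q) ⟨by omega, le_rfl⟩
    obtain ⟨⟨emin, hemin⟩, hgmin⟩ := hg_surj (m := p + 1) ⟨le_rfl, by omega⟩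
    have := hmagic' emax hemax; have := hmagic' emin hemin
    have := hmem hemax; have := hmem hemin
    obtain ⟨⟨e, he⟩, hge⟩ := hg_surj (m := k - s) ⟨by omega, by omega⟩
    exact ⟨e, he, by have := hmagic' e he; omega⟩

instance (n : ℕ) : DecidableRel (wheelMinusSpoke n).Adj :=
  inferInstanceAs (DecidableRel (fromRel _).Adj)

lemma wheelMinusSpoke_adj {n : ℕ} {x y : Fin (n + 1)} :
    (wheelMinusSpoke n).Adj x y ↔ (x : ℕ) ≠ y ∧
      (((x : ℕ) = 0 ∧ 2 ≤ (y : ℕ)) ∨ ((y : ℕ) = x + 1 ∧ 1 ≤ (x : ℕ)) ∨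
        ((x : ℕ) = n ∧ (y : ℕ) = 1) ∨ ((y : ℕ) = 0 ∧ 2 ≤ (x : ℕ)) ∨
        ((x : ℕ) = y + 1 ∧ 1 ≤ (y : ℕ)) ∨ ((y : ℕ) = n ∧ (x : ℕ) = 1)) := by
  simp only [wheelMinusSpoke, fromRel_adj, Ne, Fin.ext_iff, or_assoc]

lemma two_mul_sub_one_le_ncard_edgeSet_wheelMinusSpoke {n : ℕ} (hn : 3 ≤ n) :
    2 * n - 1 ≤ (wheelMinusSpoke n).edgeSet.ncard := by
  let edge : Fin (n - 1) ⊕ Fin (n - 1) ⊕ Unit → Sym2 (Fin (n + 1)) :=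
    Sum.elim (fun i => s(0, ⟨i + 2, by omega⟩)) <|
      Sum.elim (fun i => s(⟨i + 1, by omega⟩, ⟨i + 2, by omega⟩))
        fun _ => s(Fin.last n, ⟨1, by omega⟩)
  have hmem : ∀ i ∈ Set.univ, edge i ∈ (wheelMinusSpoke n).edgeSet := by
    rintro (i | i | ⟨⟩) - <;>
      simp only [edge, Sum.elim_inl, Sum.elim_inr, mem_edgeSet, wheelMinusSpoke_adj, Fin.val_zero,
        Fin.val_last, true_and, true_or, or_true, and_true] <;>
      omega
  have hinj : Set.InjOn edge Set.univ := by
    rintro (i | i | ⟨⟩) - (j | j | ⟨⟩) - h <;>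
      simp only [edge, Sum.elim_inl, Sum.elim_inr, Sym2.eq_iff, Fin.ext_iff, Fin.val_zero,
        Fin.val_last, Sum.inl.injEq, Sum.inr.injEq, reduceCtorEq, true_and, false_and, and_false,
        or_false] at h ⊢ <;>
      omega
  have := Set.ncard_le_ncard_of_injOn edge hmem hinj
  simp only [Set.ncard_univ, Nat.card_eq_fintype_card, Fintype.card_sum, Fintype.card_fin,
    Fintype.card_unit] at this
  omega

section Rim

variable {n : ℕ} {x y z w : Fin (n + 1)}

lemma wheelMinusSpoke_eq_or_eq_or_eq_of_rim_adj (hx : x ≠ 0) (hy : y ≠ 0)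
    (hz : z ≠ 0) (hw : w ≠ 0) (hxy : (wheelMinusSpoke n).Adj x y)
    (hxz : (wheelMinusSpoke n).Adj x z) (hxw : (wheelMinusSpoke n).Adj x w) :
    y = z ∨ y = w ∨ z = w := by
  rw [← Fin.val_ne_zero_iff] at hx hy hz hw
  rw [wheelMinusSpoke_adj] at hxy hxz hxw
  simp only [Fin.ext_iff]
  omega

lemma wheelMinusSpoke_not_rim_triangle (hn : 4 ≤ n) (hx : x ≠ 0) (hy : y ≠ 0) (hz : z ≠ 0) :
    ¬ ((wheelMinusSpoke n).Adj x y ∧ (wheelMinusSpoke n).Adj x z ∧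
      (wheelMinusSpoke n).Adj y z) := by
  rw [← Fin.val_ne_zero_iff] at hx hy hz
  simp only [wheelMinusSpoke_adj]
  omega

end Rim

namespace SimpleGraph.IsSaturatedLabeling

variable {n : ℕ} {f : Fin (n + 1) → ℕ}

lemma wheelMinusSpoke_hub_le_four (hn : 4 ≤ n) (hf : (wheelMinusSpoke n).IsSaturatedLabeling f) :
    f 0 ≤ 4 := by
  by_contra! hhub
  have rim {v : Fin (n + 1)} (hv : f v ≤ 4) : v ≠ 0 := by rintro rfl; omega
  obtain ⟨a, b, c, d, ha, hb, hc, hd, hab, hac, had | hbc⟩ :=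
    hf.exists_adj_small_labels (by simp; omega)
  · have := wheelMinusSpoke_eq_or_eq_or_eq_of_rim_adj (rim (by omega)) (rim (by omega))
      (rim (by omega)) (rim (by omega)) hab hac had
    grind
  · exact wheelMinusSpoke_not_rim_triangle hn (rim (by omega)) (rim (by omega)) (rim (by omega))
      ⟨hab, hac, hbc⟩

lemma wheelMinusSpoke_le_hub_add_two (hn : 4 ≤ n)
    (hf : (wheelMinusSpoke n).IsSaturatedLabeling f) : n ≤ f 0 + 2 := by
  have := hf.compl.wheelMinusSpoke_hub_le_four hn
  simp only [Fintype.card_fin] at this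
  omega

lemma wheelMinusSpoke_five_hub_eq {f : Fin 6 → ℕ}
    (hf : (wheelMinusSpoke 5).IsSaturatedLabeling f) : f 0 = f 1 := by
  have hdeg : ∀ v, (wheelMinusSpoke 5).degree v = ![4, 2, 3, 3, 3, 3] v := by decide
  have hsum := hf.sum_eq
  have hweighted := hf.sum_degree_mul_eq
  rw [show ∑ i ∈ Finset.Icc 1 (Fintype.card (Fin 6)), i = 21 by decide] at hsum
  rw [show ∑ i ∈ Finset.Icc 3 (2 * Fintype.card (Fin 6) - 1), i = 63 by decide] at hweighted
  simp only [Nat.reduceAdd, Fin.sum_univ_six, hdeg, Matrix.cons_val] at hsum hweighted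
  omega

lemma wheelMinusSpoke_six_two_mul_hub_eq {f : Fin 7 → ℕ}
    (hf : (wheelMinusSpoke 6).IsSaturatedLabeling f) : 2 * f 0 = f 1 + 4 := by
  have hdeg : ∀ v, (wheelMinusSpoke 6).degree v = ![5, 2, 3, 3, 3, 3, 3] v := by decide
  have hsum := hf.sum_eq
  have hweighted := hf.sum_degree_mul_eq
  rw [show ∑ i ∈ Finset.Icc 1 (Fintype.card (Fin 7)), i = 28 by decide] at hsum
  rw [show ∑ i ∈ Finset.Icc 3 (2 * Fintype.card (Fin 7) - 1), i = 88 by decide] at hweighted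
  simp only [Nat.reduceAdd, Fin.sum_univ_seven, hdeg, Matrix.cons_val] at hsum hweighted
  omega

end SimpleGraph.IsSaturatedLabeling

/-- for every `n ≥ 5`, the wheel minus a spoke `H_n` is not super
edge-magic. -/
theorem stmt3 (n : ℕ) (hn : 5 ≤ n) : ¬ IsSEM (wheelMinusSpoke n) := by
  rintro ⟨k, hk⟩
  obtain ⟨f, hf⟩ := hk.exists_isSaturatedLabeling <| by
    have := two_mul_sub_one_le_ncard_edgeSet_wheelMinusSpoke (n := n) (by omega)
    rw [Fintype.card_fin]
    omega
  have hub_le := hf.wheelMinusSpoke_hub_le_four (by omega)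
  have hub_ge := hf.wheelMinusSpoke_le_hub_add_two (by omega)
  obtain rfl | rfl : n = 5 ∨ n = 6 := by omega
  · exact absurd (hf.injective hf.wheelMinusSpoke_five_hub_eq) (by decide)
  · have := hf.wheelMinusSpoke_six_two_mul_hub_eq
    exact absurd (hf.injective (show f 0 = f 1 by omega)) (by decide)
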